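/- arXiv:2311.18462 — 2 statements merged into one kernel-verified Lean document; each statement's English description precedes it below -/
import Mathlib

section
/- First variation formula for a k-th order Lagrangian (Proposition 3.2 in local form, trivial bundle over ℝⁿ with compactly supported variations): Let n, m, k ≥ 1, let 𝒥_k = {J ∈ ℕⁿ : |J| ≤ k}, and let L : ℝⁿ × (𝒥_k → ℝ^m) → ℝ be smooth; write ∂L/∂y_J^α for its partial derivative in the coordinate labelled by (J, α). Let s : ℝⁿ → ℝ^m be smooth and let V : ℝⁿ → ℝ^m be smooth with compact support. Then for every t ∈ ℝ the function x ↦ L(j^k(s+tV)(x)) − L(j^k s(x)) is integrable on ℝⁿ, and the function t ↦ ∫_{ℝⁿ} [L(j^k(s+tV)(x)) − L(j^k s(x))] dx is differentiable at t = 0 with derivative ∫_{ℝⁿ} Σ_{α=1}^m Σ_{J ∈ 𝒥_k} (−1)^{|J|} D^J( x ↦ (∂L/∂y_J^α)(j^k s(x)) )(x) · V^α(x) dx. -/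
open MeasureTheory

/-- Partial derivative in the `μ`-th coordinate direction on `ℝⁿ`. -/
noncomputable def pd {n : ℕ} {E : Type*} [NormedAddCommGroup E] [NormedSpace ℝ E]
    (μ : Fin n) (f : (Fin n → ℝ) → E) : (Fin n → ℝ) → E :=
  fun x => fderiv ℝ f x (Pi.single μ 1)

/-- Iterated partial derivative `D^J` associated to the multi-index `J`. -/
noncomputable def DJ {n : ℕ} {E : Type*} [NormedAddCommGroup E] [NormedSpace ℝ E]
    (J : Fin n → ℕ) (f : (Fin n → ℝ) → E) : (Fin n → ℝ) → E :=
  (List.finRange n).foldr (fun μ g => (pd μ)^[J μ] g) f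

open Function

section DLsec
variable {n : ℕ} {E : Type*} [NormedAddCommGroup E] [NormedSpace ℝ E]

/-- Iterated partial derivatives along a list of directions. -/
noncomputable def DL (l : List (Fin n)) (f : (Fin n → ℝ) → E) : (Fin n → ℝ) → E :=
  l.foldr (fun μ g => pd μ g) f

@[simp] lemma DL_nil (f : (Fin n → ℝ) → E) : DL [] f = f := rfl
@[simp] lemma DL_cons (μ : Fin n) (l : List (Fin n)) (f : (Fin n → ℝ) → E) :
    DL (μ :: l) f = pd μ (DL l f) := rfl

lemma DL_append (l₁ l₂ : List (Fin n)) (f : (Fin n → ℝ) → E) :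
    DL (l₁ ++ l₂) f = DL l₁ (DL l₂ f) := by
  simp [DL, List.foldr_append]

lemma DL_replicate (i : ℕ) (μ : Fin n) (f : (Fin n → ℝ) → E) :
    DL (List.replicate i μ) f = (pd μ)^[i] f := by
  induction i with
  | zero => rfl
  | succ i ih =>
      rw [List.replicate_succ, DL_cons, ih]
      exact (Function.iterate_succ_apply' (pd μ) i f).symm

/-- The list of directions associated to a multi-index. -/
def mlist {n : ℕ} (J : Fin n → ℕ) : List (Fin n) :=
  (List.finRange n).flatMap fun μ => List.replicate (J μ) μ

lemma DJ_eq_DL (J : Fin n → ℕ) (f : (Fin n → ℝ) → E) : DJ J f = DL (mlist J) f := by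
  have : ∀ l : List (Fin n),
      l.foldr (fun μ g => (pd μ)^[J μ] g) f
        = DL (l.flatMap fun μ => List.replicate (J μ) μ) f := by
    intro l
    induction l with
    | nil => rfl
    | cons μ l ih =>
        simp only [List.foldr_cons, List.flatMap_cons, DL_append, ih, DL_replicate]
  exact this (List.finRange n)

lemma mlist_length (J : Fin n → ℕ) : (mlist J).length = ∑ μ, J μ := by
  simp only [mlist, List.length_flatMap, Fin.sum_univ_def, Function.comp_def,
    List.length_replicate]

lemma pd_contDiff {f : (Fin n → ℝ) → E} (hf : ContDiff ℝ (⊤ : ℕ∞) f) (μ : Fin n) :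
    ContDiff ℝ (⊤ : ℕ∞) (pd μ f) :=
  (hf.fderiv_right (by simp)).clm_apply contDiff_const

lemma DL_contDiff {f : (Fin n → ℝ) → E} (hf : ContDiff ℝ (⊤ : ℕ∞) f) (l : List (Fin n)) :
    ContDiff ℝ (⊤ : ℕ∞) (DL l f) := by
  induction l with
  | nil => exact hf
  | cons μ l ih => exact pd_contDiff ih μ

lemma pd_comm {f : (Fin n → ℝ) → E} (hf : ContDiff ℝ (⊤ : ℕ∞) f) (μ ν : Fin n) :
    pd μ (pd ν f) = pd ν (pd μ f) := by
  funext x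
  have h1 : ∀ y, HasFDerivAt f (fderiv ℝ f y) y :=
    fun y => (hf.differentiable (by simp) y).hasFDerivAt
  have h2 : HasFDerivAt (fderiv ℝ f) (fderiv ℝ (fderiv ℝ f) x) x :=
    (((hf.fderiv_right (by simp) : ContDiff ℝ (⊤ : ℕ∞) (fderiv ℝ f)).differentiable (by simp)) x).hasFDerivAt
  have hsymm := second_derivative_symmetric h1 h2 (Pi.single μ 1) (Pi.single ν 1)
  have e : ∀ μ' ν' : Fin n,
      pd μ' (pd ν' f) x = fderiv ℝ (fderiv ℝ f) x (Pi.single μ' 1) (Pi.single ν' 1) := by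
    intro μ' ν'
    unfold pd
    rw [fderiv_clm_apply (((hf.fderiv_right (by simp) : ContDiff ℝ (⊤ : ℕ∞) (fderiv ℝ f)).differentiable (by simp)) x)
      (differentiableAt_const _)]
    simp
  rw [e, e, hsymm]

lemma pd_DL_comm {f : (Fin n → ℝ) → E} (hf : ContDiff ℝ (⊤ : ℕ∞) f) (μ : Fin n) (l : List (Fin n)) :
    pd μ (DL l f) = DL l (pd μ f) := by
  induction l with
  | nil => rfl
  | cons ν l ih => rw [DL_cons, pd_comm (DL_contDiff hf l) μ ν, ih, DL_cons]

lemma support_pd_subset (μ : Fin n) (g : (Fin n → ℝ) → E) :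
    support (pd μ g) ⊆ tsupport g := by
  intro x hx
  by_contra h
  apply hx
  have : fderiv ℝ g x = 0 := (HasFDerivAt.of_notMem_tsupport ℝ h).fderiv
  simp [pd, this]

end DLsec

section DLsec2
variable {n : ℕ} {E : Type*} [NormedAddCommGroup E] [NormedSpace ℝ E]

lemma tsupport_pd_subset (μ : Fin n) (g : (Fin n → ℝ) → E) :
    tsupport (pd μ g) ⊆ tsupport g :=
  closure_minimal (support_pd_subset μ g) (isClosed_tsupport g)

lemma tsupport_DL_subset (l : List (Fin n)) (g : (Fin n → ℝ) → E) :
    tsupport (DL l g) ⊆ tsupport g := by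
  induction l with
  | nil => exact fun x hx => hx
  | cons μ l ih => exact (tsupport_pd_subset μ (DL l g)).trans ih

lemma hasCompactSupport_DL {g : (Fin n → ℝ) → E} (hg : HasCompactSupport g)
    (l : List (Fin n)) : HasCompactSupport (DL l g) :=
  IsCompact.of_isClosed_subset hg (isClosed_tsupport _) (tsupport_DL_subset l g)

lemma DL_zero_of_nmem {g : (Fin n → ℝ) → E} {x : Fin n → ℝ} (hx : x ∉ tsupport g)
    (l : List (Fin n)) : DL l g x = 0 := by
  have : x ∉ support (DL l g) := fun h => hx (tsupport_DL_subset l g (subset_closure h))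
  simpa [Function.mem_support, not_not] using this

lemma pd_add_smul {f g : (Fin n → ℝ) → E} (hf : ContDiff ℝ (⊤ : ℕ∞) f) (hg : ContDiff ℝ (⊤ : ℕ∞) g)
    (c : ℝ) (μ : Fin n) :
    pd μ (fun x => f x + c • g x) = fun x => pd μ f x + c • pd μ g x := by
  funext x
  have hfx := (hf.differentiable (by simp) x).hasFDerivAt
  have hgx := (hg.differentiable (by simp) x).hasFDerivAt
  have : HasFDerivAt (fun x => f x + c • g x)
      (fderiv ℝ f x + c • fderiv ℝ g x) x := hfx.add (hgx.const_smul c)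
  simp [pd, this.fderiv]

lemma DL_add_smul {f g : (Fin n → ℝ) → E} (hf : ContDiff ℝ (⊤ : ℕ∞) f) (hg : ContDiff ℝ (⊤ : ℕ∞) g)
    (c : ℝ) (l : List (Fin n)) :
    DL l (fun x => f x + c • g x) = fun x => DL l f x + c • DL l g x := by
  induction l with
  | nil => rfl
  | cons μ l ih =>
      rw [DL_cons, ih, DL_cons, DL_cons,
        pd_add_smul (DL_contDiff hf l) (DL_contDiff hg l) c μ]

lemma DJ_add_smul {f g : (Fin n → ℝ) → E} (hf : ContDiff ℝ (⊤ : ℕ∞) f) (hg : ContDiff ℝ (⊤ : ℕ∞) g)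
    (c : ℝ) (J : Fin n → ℕ) :
    DJ J (fun x => f x + c • g x) = fun x => DJ J f x + c • DJ J g x := by
  rw [DJ_eq_DL, DJ_eq_DL, DJ_eq_DL, DL_add_smul hf hg c]

lemma DJ_contDiff {f : (Fin n → ℝ) → E} (hf : ContDiff ℝ (⊤ : ℕ∞) f) (J : Fin n → ℕ) :
    ContDiff ℝ (⊤ : ℕ∞) (DJ J f) := by
  rw [DJ_eq_DL]; exact DL_contDiff hf _

lemma hasCompactSupport_DJ {g : (Fin n → ℝ) → E} (hg : HasCompactSupport g)
    (J : Fin n → ℕ) : HasCompactSupport (DJ J g) := by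
  rw [DJ_eq_DL]; exact hasCompactSupport_DL hg _

lemma DJ_zero_of_nmem {g : (Fin n → ℝ) → E} {x : Fin n → ℝ} (hx : x ∉ tsupport g)
    (J : Fin n → ℕ) : DJ J g x = 0 := by
  rw [DJ_eq_DL]; exact DL_zero_of_nmem hx _

end DLsec2

section IBP
variable {n : ℕ}

/-- The bilinear map `(a, w) ↦ a * w α`. -/
noncomputable def Bα (m : ℕ) (α : Fin m) : ℝ →L[ℝ] (Fin m → ℝ) →L[ℝ] ℝ :=
  ((ContinuousLinearMap.mul ℝ ℝ).flip.comp (ContinuousLinearMap.proj α)).flip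

@[simp] lemma Bα_apply {m : ℕ} (α : Fin m) (a : ℝ) (w : Fin m → ℝ) :
    Bα m α a w = a * w α := rfl

lemma ibp_step {m : ℕ} {f : (Fin n → ℝ) → ℝ} {g : (Fin n → ℝ) → Fin m → ℝ}
    (hf : ContDiff ℝ (⊤ : ℕ∞) f) (hg : ContDiff ℝ (⊤ : ℕ∞) g) (hgs : HasCompactSupport g)
    (μ' : Fin n) (α : Fin m) :
    ∫ x, f x * pd μ' g x α = - ∫ x, pd μ' f x * g x α := by
  have hKc : IsCompact (tsupport g) := hgs
  have int_of : ∀ h : (Fin n → ℝ) → ℝ, Continuous h →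
      (∀ x, x ∉ tsupport g → h x = 0) → Integrable h := fun h hc h0 =>
    hc.integrable_of_hasCompactSupport (HasCompactSupport.intro hKc h0)
  have hgc : Continuous fun x => g x α := (continuous_apply α).comp (hg.continuous)
  have hpgc : Continuous fun x => pd μ' g x α :=
    (continuous_apply α).comp ((pd_contDiff hg μ').continuous)
  have h0 : ∀ x, x ∉ tsupport g → g x α = 0 := fun x hx => by
    rw [image_eq_zero_of_notMem_tsupport hx]; rfl
  have h0' : ∀ x, x ∉ tsupport g → pd μ' g x α = 0 := fun x hx => by
    have : pd μ' g x = 0 := by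
      have : fderiv ℝ g x = 0 := (HasFDerivAt.of_notMem_tsupport ℝ hx).fderiv
      simp [pd, this]
    rw [this]; rfl
  have h1 : Integrable (fun x => f x * pd μ' g x α) :=
    int_of _ (hf.continuous.mul hpgc) (fun x hx => by rw [h0' x hx, mul_zero])
  have h2 : Integrable (fun x => pd μ' f x * g x α) :=
    int_of _ ((pd_contDiff hf μ').continuous.mul hgc)
      (fun x hx => by rw [h0 x hx, mul_zero])
  have h3 : Integrable (fun x => f x * g x α) :=
    int_of _ (hf.continuous.mul hgc) (fun x hx => by rw [h0 x hx, mul_zero])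
  have := integral_bilinear_fderiv_right_eq_neg_left_of_integrable
    (μ := (volume : Measure (Fin n → ℝ))) (B := Bα m α) (v := Pi.single μ' 1)
    (f := f) (g := g) ?_ ?_ ?_ (fun x _ => hf.differentiable (by simp) x) (fun x _ => hg.differentiable (by simp) x)
  · simpa [pd] using this
  · simpa [pd] using h2
  · simpa [pd] using h1
  · simpa using h3

lemma ibp_list {m : ℕ} (l : List (Fin n)) {f : (Fin n → ℝ) → ℝ}
    {g : (Fin n → ℝ) → Fin m → ℝ}
    (hf : ContDiff ℝ (⊤ : ℕ∞) f) (hg : ContDiff ℝ (⊤ : ℕ∞) g) (hgs : HasCompactSupport g) (α : Fin m) :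
    ∫ x, f x * DL l g x α = (-1 : ℝ) ^ l.length * ∫ x, DL l f x * g x α := by
  induction l generalizing f with
  | nil => simp
  | cons μ' l ih =>
      have step := ibp_step hf (DL_contDiff hg l) (hasCompactSupport_DL hgs l) μ' α
      rw [DL_cons, step, ih (pd_contDiff hf μ'), ← pd_DL_comm hf μ' l, ← DL_cons,
        List.length_cons, pow_succ]
      ring

lemma ibp_DJ {m : ℕ} (J : Fin n → ℕ) {f : (Fin n → ℝ) → ℝ}
    {g : (Fin n → ℝ) → Fin m → ℝ}
    (hf : ContDiff ℝ (⊤ : ℕ∞) f) (hg : ContDiff ℝ (⊤ : ℕ∞) g) (hgs : HasCompactSupport g) (α : Fin m) :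
    ∫ x, f x * DJ J g x α = (-1 : ℝ) ^ (∑ μ, J μ) * ∫ x, DJ J f x * g x α := by
  rw [DJ_eq_DL, DJ_eq_DL, ← mlist_length J]
  exact ibp_list (mlist J) hf hg hgs α

end IBP

/-- The set `𝒥_k` of multi-indices of length at most `k`. -/
def MIdx (n k : ℕ) : Type := {J : Fin n → ℕ // ∑ μ, J μ ≤ k}

instance (n k : ℕ) : DecidableEq (MIdx n k) := by
  unfold MIdx; infer_instance

noncomputable instance (n k : ℕ) : Fintype (MIdx n k) :=
  Fintype.ofInjective
    (fun J : MIdx n k => (fun μ => (⟨J.1 μ,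
      Nat.lt_succ_of_le ((Finset.single_le_sum (f := J.1)
        (fun i _ => Nat.zero_le _) (Finset.mem_univ μ)).trans J.2)⟩ : Fin (k + 1))))
    (by
      intro J J' h
      apply Subtype.ext
      funext μ
      exact congrArg Fin.val (congrFun h μ))

/-- The `k`-jet of a smooth map `s : ℝⁿ → ℝᵐ`, in coordinates:
`j^k s (x) = (x, J ↦ D^J s (x))`. -/
noncomputable def jet (n m k : ℕ) (s : (Fin n → ℝ) → Fin m → ℝ) :
    (Fin n → ℝ) → (Fin n → ℝ) × (MIdx n k → Fin m → ℝ) :=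
  fun x => (x, fun J => DJ J.1 s x)

/-- The partial derivative `∂L/∂y_J^α` of a Lagrangian `L` in the jet coordinate `(J, α)`. -/
noncomputable def pL {n m k : ℕ}
    (L : (Fin n → ℝ) × (MIdx n k → Fin m → ℝ) → ℝ) (J : MIdx n k) (α : Fin m) :
    (Fin n → ℝ) × (MIdx n k → Fin m → ℝ) → ℝ :=
  fun p => fderiv ℝ L p (0, Pi.single J (Pi.single α 1))

/-- First variation formula for a `k`-th order Lagrangian on the trivial bundle over `ℝⁿ`
with compactly supported variations: for every `t` the integrand is integrable, and the
action variation `t ↦ ∫ [L(j^k(s+tV)) − L(j^k s)]` is differentiable at `t = 0` with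
derivative `∫ ∑_α ∑_{|J| ≤ k} (−1)^{|J|} D^J(∂L/∂y_J^α ∘ j^k s) · V^α`. -/
theorem first_variation_formula (n m k : ℕ) (hn : 1 ≤ n) (hm : 1 ≤ m) (hk : 1 ≤ k)
    (L : (Fin n → ℝ) × (MIdx n k → Fin m → ℝ) → ℝ) (hL : ContDiff ℝ (⊤ : ℕ∞) L)
    (s : (Fin n → ℝ) → Fin m → ℝ) (hs : ContDiff ℝ (⊤ : ℕ∞) s)
    (V : (Fin n → ℝ) → Fin m → ℝ) (hV : ContDiff ℝ (⊤ : ℕ∞) V) (hVsupp : HasCompactSupport V) :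
    (∀ t : ℝ, Integrable
        (fun x => L (jet n m k (fun y => s y + t • V y) x) - L (jet n m k s x))) ∧
      HasDerivAt
        (fun t : ℝ =>
          ∫ x : Fin n → ℝ, (L (jet n m k (fun y => s y + t • V y) x) - L (jet n m k s x)))
        (∫ x : Fin n → ℝ, ∑ α, ∑ J : MIdx n k,
          (-1 : ℝ) ^ (∑ μ, J.1 μ) * DJ J.1 (fun y => pL L J α (jet n m k s y)) x * V x α)
        0 := by
  classical
  set K := tsupport V with hKdef
  have hKc : IsCompact K := hVsupp
  set W : (Fin n → ℝ) → MIdx n k → Fin m → ℝ := fun x J => DJ J.1 V x with hWdef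
  set S : (Fin n → ℝ) → MIdx n k → Fin m → ℝ := fun x J => DJ J.1 s x with hSdef
  have hjet : ∀ (t : ℝ) (x : Fin n → ℝ),
      jet n m k (fun y => s y + t • V y) x = (x, S x + t • W x) := by
    intro t x
    refine Prod.ext rfl ?_
    funext J
    have h := congrFun (DJ_add_smul hs hV t J.1) x
    simpa [jet, hSdef, hWdef] using h
  have hjet0 : ∀ x, jet n m k s x = (x, S x) := fun x => rfl
  have hW0 : ∀ x, x ∉ K → W x = 0 := by
    intro x hx
    funext J
    exact DJ_zero_of_nmem hx J.1
  have hScd : ContDiff ℝ (⊤ : ℕ∞) S := contDiff_pi.mpr fun J => DJ_contDiff hs J.1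
  have hWcd : ContDiff ℝ (⊤ : ℕ∞) W := contDiff_pi.mpr fun J => DJ_contDiff hV J.1
  have int_of : ∀ h : (Fin n → ℝ) → ℝ, Continuous h →
      (∀ x, x ∉ K → h x = 0) → Integrable h := fun h hc h0 =>
    hc.integrable_of_hasCompactSupport (HasCompactSupport.intro hKc h0)
  -- Part 1 : integrability
  have part1 : ∀ t : ℝ, Integrable
      (fun x => L (jet n m k (fun y => s y + t • V y) x) - L (jet n m k s x)) := by
    intro t
    have heq : (fun x => L (jet n m k (fun y => s y + t • V y) x) - L (jet n m k s x))
        = fun x => L (x, S x + t • W x) - L (x, S x) := by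
      funext x; rw [hjet t x, hjet0 x]
    rw [heq]
    apply int_of
    · exact (hL.continuous.comp ((continuous_id.prodMk
        ((hScd.continuous).add (hWcd.continuous.const_smul t))))).sub
        (hL.continuous.comp (continuous_id.prodMk hScd.continuous))
    · intro x hx
      rw [hW0 x hx]
      simp
  refine ⟨part1, ?_⟩
  have hFeq : ∀ t : ℝ, (fun x => L (jet n m k (fun y => s y + t • V y) x) - L (jet n m k s x))
      = fun x => L (x, S x + t • W x) - L (x, S x) := by
    intro t; funext x; rw [hjet t x, hjet0 x]
  set F : ℝ → (Fin n → ℝ) → ℝ := fun t x => L (x, S x + t • W x) - L (x, S x) with hFdef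
  set F' : ℝ → (Fin n → ℝ) → ℝ :=
    fun t x => fderiv ℝ L (x, S x + t • W x) (0, W x) with hF'def
  have hFint : ∀ t, Integrable (F t) := fun t => by
    have := part1 t
    rwa [hFeq t] at this
  have hF'cd : ContDiff ℝ (⊤ : ℕ∞) (fun q : ℝ × (Fin n → ℝ) => F' q.1 q.2) := by
    have hΦ : ContDiff ℝ (⊤ : ℕ∞) (fun q : ℝ × (Fin n → ℝ) => (q.2, S q.2 + q.1 • W q.2)) :=
      (contDiff_snd).prodMk ((hScd.comp contDiff_snd).add
        (contDiff_fst.smul (hWcd.comp contDiff_snd)))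
    exact ((hL.fderiv_right (by simp)).comp hΦ).clm_apply
      (contDiff_const.prodMk (hWcd.comp contDiff_snd))
  obtain ⟨C, hC⟩ := ((isCompact_Icc (a := (-1:ℝ)) (b := 1)).prod hKc).exists_bound_of_continuousOn
    hF'cd.continuous.continuousOn
  set bound : (Fin n → ℝ) → ℝ := K.indicator (fun _ => C) with hbdef
  have hbound_int : Integrable bound := by
    apply IntegrableOn.integrable_indicator _ hKc.measurableSet
    exact integrableOn_const hKc.measure_lt_top.ne
  have hF'0 : ∀ (t : ℝ) (x : Fin n → ℝ), x ∉ K → F' t x = 0 := by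
    intro t x hx
    rw [hF'def]
    simp only [hW0 x hx]
    rw [Prod.mk_zero_zero, map_zero]
  have h_bound : ∀ᵐ x : Fin n → ℝ, ∀ t ∈ Metric.ball (0:ℝ) 1, ‖F' t x‖ ≤ bound x := by
    refine Filter.Eventually.of_forall fun x t ht => ?_
    by_cases hx : x ∈ K
    · rw [hbdef, Set.indicator_of_mem hx]
      have htI : t ∈ Set.Icc (-1 : ℝ) 1 := by
        rw [Metric.mem_ball, Real.dist_eq, sub_zero] at ht
        exact ⟨(abs_lt.mp ht).1.le, (abs_lt.mp ht).2.le⟩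
      exact hC (t, x) ⟨htI, hx⟩
    · rw [hbdef, Set.indicator_of_notMem hx, hF'0 t x hx, norm_zero]
  have h_diff : ∀ᵐ x : Fin n → ℝ, ∀ t ∈ Metric.ball (0:ℝ) 1,
      HasDerivAt (fun t => F t x) (F' t x) t := by
    refine Filter.Eventually.of_forall fun x t _ => ?_
    have h1 : HasDerivAt (fun t : ℝ => S x + t • W x) (W x) t := by
      simpa using ((hasDerivAt_id t).smul_const (W x)).const_add (S x)
    have h2 : HasDerivAt (fun t : ℝ =>
        ((x, S x + t • W x) : (Fin n → ℝ) × (MIdx n k → Fin m → ℝ))) ((0, W x)) t :=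
      (hasDerivAt_const t x).prodMk h1
    have h3 := ((hL.differentiable (by simp) _).hasFDerivAt).comp_hasDerivAt t h2
    exact h3.sub_const _
  have key := hasDerivAt_integral_of_dominated_loc_of_deriv_le (μ := volume) (F := F)
      (F' := F') (x₀ := (0:ℝ)) (bound := bound) (Metric.ball_mem_nhds 0 one_pos)
      (Filter.Eventually.of_forall fun t => (hFint t).aestronglyMeasurable)
      (hFint 0)
      ((hF'cd.continuous.comp (continuous_const.prodMk continuous_id)).aestronglyMeasurable)
      h_bound hbound_int h_diff
  have hfun : (fun t : ℝ => ∫ x : Fin n → ℝ,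
        (L (jet n m k (fun y => s y + t • V y) x) - L (jet n m k s x)))
      = fun t => ∫ x, F t x := by
    funext t
    exact congrArg (fun f => ∫ x, f x) (hFeq t)
  rw [hfun]
  have hval : (∫ x, F' 0 x) = ∫ x : Fin n → ℝ, ∑ α, ∑ J : MIdx n k,
      (-1:ℝ) ^ (∑ μ, J.1 μ) * DJ J.1 (fun y => pL L J α (jet n m k s y)) x * V x α := by
    have hdec : ∀ w : MIdx n k → Fin m → ℝ,
        (((0 : Fin n → ℝ), w) : (Fin n → ℝ) × (MIdx n k → Fin m → ℝ))
          = ∑ J : MIdx n k, ∑ α, w J α •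
              (((0 : Fin n → ℝ), Pi.single J (Pi.single α 1)) :
                (Fin n → ℝ) × (MIdx n k → Fin m → ℝ)) := by
      intro w
      refine Prod.ext ?_ ?_
      · simp [Prod.fst_sum]
      · simp only [Prod.snd_sum, Prod.smul_mk, smul_zero]
        funext J' α'
        simp [Finset.sum_apply, Pi.single_apply, apply_ite (fun v : Fin m → ℝ => v α'),
          Finset.sum_ite_eq, Finset.sum_ite_eq', mul_ite, mul_zero, mul_one,
          smul_eq_mul]
    have hpt : ∀ x, F' 0 x = ∑ J : MIdx n k, ∑ α,
        pL L J α (jet n m k s x) * DJ J.1 V x α := by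
      intro x
      have h0 : F' 0 x = fderiv ℝ L (jet n m k s x) (0, W x) := by
        rw [hF'def]
        simp only [zero_smul, add_zero]
        rw [hjet0 x]
      rw [h0, hdec (W x), map_sum]
      refine Finset.sum_congr rfl fun J _ => ?_
      rw [map_sum]
      refine Finset.sum_congr rfl fun α _ => ?_
      rw [(fderiv ℝ L (jet n m k s x)).map_smul, smul_eq_mul, mul_comm]
      rfl
    have hjetc : ContDiff ℝ (⊤ : ℕ∞) (fun x => jet n m k s x) := by
      exact contDiff_id.prodMk hScd
    have hf : ∀ (J : MIdx n k) (α : Fin m),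
        ContDiff ℝ (⊤ : ℕ∞) (fun x => pL L J α (jet n m k s x)) :=
      fun J α => ((hL.fderiv_right (by simp)).comp hjetc).clm_apply contDiff_const
    have hterm_int : ∀ (J : MIdx n k) (α : Fin m),
        Integrable (fun x => pL L J α (jet n m k s x) * DJ J.1 V x α) := fun J α =>
      int_of _ ((hf J α).continuous.mul
        ((continuous_apply α).comp (DJ_contDiff hV J.1).continuous))
        (fun x hx => by rw [DJ_zero_of_nmem hx J.1]; simp)
    calc (∫ x, F' 0 x)
        = ∫ x, ∑ J : MIdx n k, ∑ α, pL L J α (jet n m k s x) * DJ J.1 V x α := by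
          exact congrArg (fun f => ∫ x, f x) (funext hpt)
      _ = ∑ J : MIdx n k, ∑ α, ∫ x, pL L J α (jet n m k s x) * DJ J.1 V x α := by
          rw [integral_finset_sum _
            (fun J _ => integrable_finset_sum _ (fun α _ => hterm_int J α))]
          exact Finset.sum_congr rfl fun J _ =>
            integral_finset_sum _ (fun α _ => hterm_int J α)
      _ = ∑ J : MIdx n k, ∑ α, ∫ x, (-1:ℝ) ^ (∑ μ, J.1 μ) *
            DJ J.1 (fun y => pL L J α (jet n m k s y)) x * V x α := by
          refine Finset.sum_congr rfl fun J _ => Finset.sum_congr rfl fun α _ => ?_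
          rw [ibp_DJ J.1 (hf J α) hV hVsupp α]
          simp_rw [mul_assoc]
          rw [integral_const_mul]
      _ = ∫ x, ∑ J : MIdx n k, ∑ α, (-1:ℝ) ^ (∑ μ, J.1 μ) *
            DJ J.1 (fun y => pL L J α (jet n m k s y)) x * V x α := by
          have hterm_int' : ∀ (J : MIdx n k) (α : Fin m),
              Integrable (fun x => (-1:ℝ) ^ (∑ μ, J.1 μ) *
                DJ J.1 (fun y => pL L J α (jet n m k s y)) x * V x α) := fun J α =>
            int_of _ ((continuous_const.mul (DJ_contDiff (hf J α) J.1).continuous).mul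
              ((continuous_apply α).comp hV.continuous))
              (fun x hx => by
                rw [show V x = 0 from image_eq_zero_of_notMem_tsupport hx]; simp)
          rw [integral_finset_sum _
            (fun J _ => integrable_finset_sum _ (fun α _ => hterm_int' J α))]
          refine Finset.sum_congr rfl fun J _ => ?_
          rw [integral_finset_sum _ (fun α _ => hterm_int' J α)]
      _ = ∫ x : Fin n → ℝ, ∑ α, ∑ J : MIdx n k, (-1:ℝ) ^ (∑ μ, J.1 μ) *
            DJ J.1 (fun y => pL L J α (jet n m k s y)) x * V x α := by
          refine congrArg (fun f : (Fin n → ℝ) → ℝ => ∫ x, f x) (funext fun x => ?_)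
          exact Finset.sum_comm
  exact hval ▸ key.2
end

section
/- Bi-invariant simplification of the Euler–Poincaré equations for 2-splines (Corollary 7.5 computation): Let 𝔤 be a finite-dimensional real Lie algebra with an inner product ⟨·,·⟩ such that every ad_ξ = [ξ,·] is skew-adjoint, i.e. ⟨[ξ,η],ζ⟩ = −⟨η,[ξ,ζ]⟩ for all ξ, η, ζ ∈ 𝔤, and write ad_ξ† for the metric adjoint of ad_ξ (so ad_ξ† = −ad_ξ). Let σ : ℝ → 𝔤 be smooth and define η : ℝ → 𝔤 pointwise by η = σ' + ad_σ†(σ). Then for every t ∈ ℝ: (d/dt)[ ad_η†(σ) + [η,σ] + η' ](t) − ad_{σ(t)}†( ad_{η(t)}†(σ(t)) + [η(t),σ(t)] + η'(t) ) = σ'''(t) + [σ(t), σ''(t)]. -/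
open scoped RealInnerProductSpace

/-- Bi-invariant simplification of the Euler–Poincaré equations for 2-splines: let `𝔤` be a
finite-dimensional real Lie algebra (bracket `br` with `br x x = 0` and the Jacobi identity)
with an inner product such that every `ad_ξ = br ξ` is skew-adjoint, and let `dag ξ` be the
metric adjoint of `ad_ξ` (so `dag ξ = −br ξ`). If `σ : ℝ → 𝔤` is smooth and
`η = σ' + dag σ σ` pointwise, then for every `t`:
`(d/dt)[dag η σ + [η,σ] + η'](t) − dag (σ t) (dag (η t) (σ t) + [η t, σ t] + η' t)
  = σ'''(t) + [σ t, σ''(t)]`. -/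
theorem biinvariant_two_splines (𝔤 : Type*) [NormedAddCommGroup 𝔤]
    [InnerProductSpace ℝ 𝔤] [FiniteDimensional ℝ 𝔤]
    (br : 𝔤 →ₗ[ℝ] 𝔤 →ₗ[ℝ] 𝔤)
    (hanti : ∀ x : 𝔤, br x x = 0)
    (hjacobi : ∀ x y z : 𝔤, br x (br y z) + br y (br z x) + br z (br x y) = 0)
    (dag : 𝔤 → 𝔤 → 𝔤)
    (hdag : ∀ ξ η ζ : 𝔤, ⟪br ξ η, ζ⟫ = ⟪η, dag ξ ζ⟫)
    (hskew : ∀ ξ η ζ : 𝔤, ⟪br ξ η, ζ⟫ = -⟪η, br ξ ζ⟫)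
    (σ : ℝ → 𝔤) (hσ : ContDiff ℝ (⊤ : ℕ∞) σ)
    (η : ℝ → 𝔤) (hη : η = fun t => deriv σ t + dag (σ t) (σ t)) :
    ∀ t : ℝ,
      deriv (fun u => dag (η u) (σ u) + br (η u) (σ u) + deriv η u) t
          - dag (σ t) (dag (η t) (σ t) + br (η t) (σ t) + deriv η t)
        = deriv (deriv (deriv σ)) t + br (σ t) (deriv (deriv σ) t) := by
  have hdagbr : ∀ x y : 𝔤, dag x y = -br x y := by
    intro x y
    apply ext_inner_left ℝ
    intro v
    rw [← hdag x v y, hskew x v y, inner_neg_right]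
  have hη' : η = deriv σ := by
    funext t; rw [hη]; simp [hdagbr, hanti]
  intro t
  have hfun : (fun u => dag (η u) (σ u) + br (η u) (σ u) + deriv η u)
      = deriv (deriv σ) := by
    funext u; rw [hdagbr, hη']; abel
  rw [hfun, hη', hdagbr]
  simp [hdagbr]
end
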